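/- Let B be an N×D real matrix, τv, τy > 0, with BᵀB = Q Λ Qᵀ, Q orthogonal, Λ diagonal nonnegative. Set Σv = τv·I_D and Σy = τy·I_N, and assume E := B Σv Bᵀ + Σy is invertible. Then Σv Bᵀ E⁻¹ = (τv/τy)·(Bᵀ − (1/τy)·Q Λ ((1/τv)·I + (1/τy)·Λ)⁻¹ Qᵀ Bᵀ). -/

import Mathlib

/-!
The push-through identity `Bᵀ (τv B Bᵀ + τy I) = (τv BᵀB + τy I) Bᵀ` gives
`Bᵀ E⁻¹ = (τv BᵀB + τy I)⁻¹ Bᵀ`, trading the `N × N` inverse for a `D × D` one. In the eigenbasis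
`Q` of `BᵀB` that inverse is diagonal with entries `1 / (τy + τv λᵢ)`, and the right-hand side of
the claim is `Q` times a diagonal matrix times `Qᵀ Bᵀ` as well; the two diagonals agree entrywise
by a scalar identity.
-/

open Matrix

namespace Matrix

variable {m n K : Type*} [Field K]

theorem mul_inv_eq_of_mul_eq_mul [Fintype m] [DecidableEq m] [Fintype n] [DecidableEq n]
    {X : Matrix m n K} {E : Matrix n n K} {F G : Matrix m m K}
    (hXE : X * E = F * X) (hGF : G * F = 1) (hE : IsUnit E.det) : X * E⁻¹ = G * X := by
  calc X * E⁻¹ = G * F * X * E⁻¹ := by rw [hGF, Matrix.one_mul]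
    _ = G * X := by
      rw [Matrix.mul_assoc G, ← hXE, ← Matrix.mul_assoc, mul_nonsing_inv_cancel_right _ _ hE]

theorem transpose_mul_gram_add_smul_one [Fintype m] [DecidableEq m] [Fintype n] [DecidableEq n]
    (X : Matrix m n K) (a c : K) :
    Xᵀ * (X * (a • (1 : Matrix n n K)) * Xᵀ + c • 1) = (a • (Xᵀ * X) + c • 1) * Xᵀ := by
  simp only [Matrix.mul_add, Matrix.add_mul, Matrix.mul_smul, Matrix.smul_mul, Matrix.mul_one,
    Matrix.one_mul, Matrix.mul_assoc]

theorem smul_one_add_smul_diagonal [DecidableEq n] (a b : K) (d : n → K) :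
    a • (1 : Matrix n n K) + b • diagonal d = diagonal fun i => a + b * d i := by
  rw [← diagonal_one, ← diagonal_smul, ← diagonal_smul, diagonal_add]
  simp

theorem inv_diagonal_of_ne_zero [Fintype n] [DecidableEq n] {d : n → K} (hd : ∀ i, d i ≠ 0) :
    (diagonal d)⁻¹ = diagonal fun i => (d i)⁻¹ := by
  refine inv_eq_left_inv ?_
  rw [diagonal_mul_diagonal]
  simp [hd]

section Orthogonal

variable [Fintype n] [DecidableEq n] {Q : Matrix n n K}

theorem conj_diagonal_mul_conj_diagonal (hQ : Qᵀ * Q = 1) (d e : n → K) :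
    Q * diagonal d * Qᵀ * (Q * diagonal e * Qᵀ) = Q * diagonal (fun i => d i * e i) * Qᵀ := by
  rw [← diagonal_mul_diagonal]
  simp only [Matrix.mul_assoc]
  rw [← Matrix.mul_assoc Qᵀ, hQ, Matrix.one_mul]

theorem conj_diagonal_const_add_smul (hQ : Q * Qᵀ = 1) (a c : K) (d : n → K) :
    Q * diagonal (fun i => c + a * d i) * Qᵀ = c • 1 + a • (Q * diagonal d * Qᵀ) := by
  rw [← smul_one_add_smul_diagonal, Matrix.mul_add, Matrix.add_mul]
  simp [hQ]

theorem smul_conj_diagonal_mul (X : Matrix n m K) (c : K) (d : n → K) :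
    c • (Q * diagonal d * Qᵀ * X) = Q * diagonal (fun i => c * d i) * Qᵀ * X := by
  rw [← Matrix.smul_mul, ← Matrix.smul_mul, ← Matrix.mul_smul, ← diagonal_smul]
  rfl

theorem smul_sub_smul_conj_diagonal_mul (hQ : Q * Qᵀ = 1) (X : Matrix n m K) (a c : K)
    (d : n → K) :
    c • (X - a • (Q * diagonal d * Qᵀ * X)) =
      Q * diagonal (fun i => c * (1 - a * d i)) * Qᵀ * X := by
  have hdiag : (diagonal fun i => c * (1 - a * d i)) = c • (1 - a • diagonal d) := by
    ext i j
    by_cases h : i = j <;> simp [h]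
  rw [hdiag]
  simp [Matrix.mul_sub, Matrix.sub_mul, Matrix.mul_assoc, hQ]

end Orthogonal

end Matrix

theorem div_mul_one_sub_mul_inv_eq {K : Type*} [Field K] {a b x : K} (ha : a ≠ 0) (hb : b ≠ 0)
    (hx : b + a * x ≠ 0) :
    a / b * (1 - 1 / b * (x * (1 / a + 1 / b * x)⁻¹)) = a * (b + a * x)⁻¹ := by
  have hsum : 1 / a + 1 / b * x = (b + a * x) / (a * b) := by field_simp
  rw [hsum]
  field_simp
  ring

/-- Theorem 2 (mean/gain formula): with `Σv = τv I`, `Σy = τy I` and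
`BᵀB = Q Λ Qᵀ`,
`Σv Bᵀ E⁻¹ = (τv/τy)(Bᵀ − (1/τy) Q Λ ((1/τv)I + (1/τy)Λ)⁻¹ Qᵀ Bᵀ)`. -/
theorem gain_matrix_eig {N D : ℕ} (B : Matrix (Fin N) (Fin D) ℝ)
    (τv τy : ℝ) (hv : 0 < τv) (hy : 0 < τy)
    (Q : Matrix (Fin D) (Fin D) ℝ) (hQ : Qᵀ * Q = 1)
    (l : Fin D → ℝ) (hl : ∀ i, 0 ≤ l i)
    (hBB : Bᵀ * B = Q * Matrix.diagonal l * Qᵀ)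
    (hE : IsUnit (B * (τv • (1 : Matrix (Fin D) (Fin D) ℝ)) * Bᵀ
        + τy • (1 : Matrix (Fin N) (Fin N) ℝ)).det) :
    (τv • (1 : Matrix (Fin D) (Fin D) ℝ)) * Bᵀ
        * (B * (τv • (1 : Matrix (Fin D) (Fin D) ℝ)) * Bᵀ
            + τy • (1 : Matrix (Fin N) (Fin N) ℝ))⁻¹
      = (τv / τy) • (Bᵀ - (1 / τy) •
          (Q * Matrix.diagonal l
            * ((1 / τv) • (1 : Matrix (Fin D) (Fin D) ℝ)
                + (1 / τy) • Matrix.diagonal l)⁻¹ * Qᵀ * Bᵀ)) := by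
  have hQQ : Q * Qᵀ = 1 := mul_eq_one_comm.mp hQ
  have hF : ∀ i, τy + τv * l i ≠ 0 := fun i => by have := hl i; positivity
  have hS : ∀ i, 1 / τv + 1 / τy * l i ≠ 0 := fun i => by have := hl i; positivity
  have hpush : Bᵀ * (B * (τv • (1 : Matrix (Fin D) (Fin D) ℝ)) * Bᵀ + τy • 1) =
      Q * diagonal (fun i => τy + τv * l i) * Qᵀ * Bᵀ := by
    rw [transpose_mul_gram_add_smul_one, hBB, conj_diagonal_const_add_smul hQQ, add_comm]
  have hGF : Q * diagonal (fun i => (τy + τv * l i)⁻¹) * Qᵀ *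
      (Q * diagonal (fun i => τy + τv * l i) * Qᵀ) = 1 := by
    simp [conj_diagonal_mul_conj_diagonal hQ, hF, hQQ]
  rw [Matrix.smul_mul, Matrix.one_mul, Matrix.smul_mul, mul_inv_eq_of_mul_eq_mul hpush hGF hE,
    smul_conj_diagonal_mul]
  rw [smul_one_add_smul_diagonal, inv_diagonal_of_ne_zero hS, Matrix.mul_assoc Q (diagonal l),
    diagonal_mul_diagonal, smul_sub_smul_conj_diagonal_mul hQQ]
  congr 4 with i
  exact (div_mul_one_sub_mul_inv_eq hv.ne' hy.ne' (hF i)).symm
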